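/- Let n ≥ 1, α ≥ 0 with α/2 < 1/n, β = log(1/n − α/2), and ε(t) = 1/n − exp(−αt + β). Then for all t ≥ 0 with ε(t) > 0, the inequality 2ε(t)² + ε′(t) ≤ (2/n)·ε(t) holds; equivalently, 0 ≤ ε(t) + ε′(t)/(2ε(t)) ≤ 1/n whenever ε(t) > 0. -/
import Mathlib


theorem stmt_2 (n : ℕ) (hn : 1 ≤ n) (α : ℝ) (hα : 0 ≤ α)
    (hα1 : α / 2 < 1 / (n : ℝ)) (β : ℝ) (hβ : β = Real.log (1 / (n : ℝ) - α / 2))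
    (ε ε' : ℝ → ℝ) (hε : ∀ t, ε t = 1 / (n : ℝ) - Real.exp (-α * t + β))
    (hε' : ∀ t, ε' t = α * Real.exp (-α * t + β)) :
    ∀ t : ℝ, 0 ≤ t → 0 < ε t →
      (2 * (ε t) ^ 2 + ε' t ≤ (2 / (n : ℝ)) * ε t ∧
        0 ≤ ε t + ε' t / (2 * ε t) ∧ ε t + ε' t / (2 * ε t) ≤ 1 / (n : ℝ)) := by
  intro t ht hpos
  have hnpos : 0 < 1 / (n : ℝ) - α / 2 := by linarith
  have hEβ : Real.exp β = 1 / (n : ℝ) - α / 2 := by rw [hβ, Real.exp_log hnpos]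
  have hE : Real.exp (-α * t + β) ≤ 1 / (n : ℝ) - α / 2 := by
    rw [← hEβ]
    exact Real.exp_le_exp.mpr (by nlinarith)
  have hEpos : 0 < Real.exp (-α * t + β) := Real.exp_pos _
  have h1 : 2 * (ε t) ^ 2 + ε' t ≤ (2 / (n : ℝ)) * ε t := by
    have h2n : (2:ℝ)/(n:ℝ) = 2*(1/(n:ℝ)) := by ring
    rw [hε, hε', h2n]
    nlinarith [mul_nonneg (show (0:ℝ) ≤ 2 * (1 / (n : ℝ) - Real.exp (-α * t + β)) - α by
      rw [hε] at hpos; linarith) hEpos.le]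
  have hεnn : 0 ≤ ε' t := by rw [hε']; positivity
  have h2 : 0 ≤ ε t + ε' t / (2 * ε t) :=
    add_nonneg hpos.le (div_nonneg hεnn (by linarith))
  refine ⟨h1, h2, ?_⟩
  have h3 : ε' t / (2 * ε t) * (2 * ε t) = ε' t :=
    div_mul_cancel₀ _ (by positivity)
  have h4 : 2 * ε t * (ε t + ε' t / (2 * ε t)) ≤ 2 * ε t * (1 / (n : ℝ)) := by
    have hr : 2/(n:ℝ) * ε t = 2 * ε t * (1/(n:ℝ)) := by ring
    nlinarith [h3, hr]
  exact le_of_mul_le_mul_left h4 (by linarith)
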